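/- For all reduced planar trees t, u, v different from the leaf |, the number N(t,u,v) of one-edge admissible cuts c = {e} of v such that the pruning P^c(v) is the single tree t and the trunk R^c(v) is u, equals the number M(t,u,v) of leaves ℓ of u such that the grafting of t at ℓ in u equals v. -/
import Mathlib


/-- Reduced planar trees: the leaf `|`, or `∨(t1,…,tn)` with `n ≥ 2`; the internal
vertex `∨(t1,t2,…,tn)` is encoded as `node t1 t2 [t3,…,tn]`, so that the list of
branches automatically has length at least `2`. -/
inductive R : Type
  | leaf : R
  | node : R → R → List R → R

noncomputable instance : DecidableEq R := Classical.decEq R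

mutual
/-- List of all graftings of `t` at the successive leaves (left to right) of a tree. -/
def graftings (t : R) : R → List R
  | .leaf => [t]
  | .node t1 t2 rest =>
      (graftings t t1).map (fun t1' => R.node t1' t2 rest) ++
      (graftings t t2).map (fun t2' => R.node t1 t2' rest) ++
      (graftingsL t rest).map (fun rest' => R.node t1 t2 rest')

/-- All ways to graft `t` at one leaf of one of the trees of a list of trees. -/
def graftingsL (t : R) : List R → List (List R)
  | [] => []
  | u :: us =>
      (graftings t u).map (fun u' => u' :: us) ++
      (graftingsL t us).map (fun us' => u :: us')
end

mutual
/-- The list of all one-edge admissible cuts of a reduced planar tree, each cut `{e}`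
recorded as the pair `(pruning, trunk)`: the non-leaf edges of `t` are in bijection
with the internal vertices of `t`, and cutting the edge below an internal vertex
removes the subtree standing above it (the pruning) and replaces it in `t` by a
single leaf (giving the trunk); the cuts are listed from left to right. -/
def cuts1 : R → List (R × R)
  | .leaf => []
  | .node t1 t2 rest =>
      (R.node t1 t2 rest, R.leaf) ::
      ((cuts1 t1).map (fun p => (p.1, R.node p.2 t2 rest)) ++
       (cuts1 t2).map (fun p => (p.1, R.node t1 p.2 rest)) ++
       (cuts1L rest).map (fun p => (p.1, R.node t1 t2 p.2)))

/-- One-edge admissible cuts of a forest (one cut in one of the trees of the list). -/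
def cuts1L : List R → List (R × List R)
  | [] => []
  | u :: us =>
      (cuts1 u).map (fun p => (p.1, p.2 :: us)) ++
      (cuts1L us).map (fun p => (p.1, u :: p.2))
end

/-- `N(t,u,v)`: the number of one-edge admissible cuts `c = {e}` of `v` whose pruning
`P^c(v)` is the single tree `t` and whose trunk `R^c(v)` is `u`. -/
noncomputable def N (t u v : R) : ℕ := (cuts1 v).count (t, u)

/-- `M(t,u,v)`: the number of leaves `ℓ` of `u` such that grafting `t` at `ℓ` in `u`
yields `v`. -/
noncomputable def M (t u v : R) : ℕ := (graftings t u).count v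


private lemma count_map' {α β} [BEq β] (f : α → β) (l : List α) (b : β) :
    (l.map f).count b = l.countP (fun a => f a == b) := by
  rw [List.count, List.countP_map]; rfl

private lemma cnt1 (l : List (R × R)) (t u1 u2 v2 : R) (us vs : List R) :
    (l.map (fun p => (p.1, R.node p.2 v2 vs))).count (t, R.node u1 u2 us)
      = if u2 = v2 ∧ us = vs then l.count (t, u1) else 0 := by
  rw [count_map']
  split_ifs with h
  · obtain ⟨rfl, rfl⟩ := h
    rw [List.count]
    refine List.countP_congr (fun p _ => ?_)
    simp [beq_eq_decide, decide_eq_decide, Prod.ext_iff, and_comm]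
  · refine List.countP_eq_zero.2 (fun p _ => ?_)
    simp only [beq_eq_decide, decide_eq_true_eq, Prod.ext_iff, R.node.injEq]
    tauto

private lemma cnt2 (l : List (R × R)) (t u1 u2 v1 : R) (us vs : List R) :
    (l.map (fun p => (p.1, R.node v1 p.2 vs))).count (t, R.node u1 u2 us)
      = if u1 = v1 ∧ us = vs then l.count (t, u2) else 0 := by
  rw [count_map']
  split_ifs with h
  · obtain ⟨rfl, rfl⟩ := h
    rw [List.count]
    refine List.countP_congr (fun p _ => ?_)
    simp [beq_eq_decide, decide_eq_decide, Prod.ext_iff, and_comm]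
  · refine List.countP_eq_zero.2 (fun p _ => ?_)
    simp only [beq_eq_decide, decide_eq_true_eq, Prod.ext_iff, R.node.injEq]
    tauto

private lemma cnt3 (l : List (R × List R)) (t u1 u2 v1 v2 : R) (us : List R) :
    (l.map (fun p => (p.1, R.node v1 v2 p.2))).count (t, R.node u1 u2 us)
      = if u1 = v1 ∧ u2 = v2 then l.count (t, us) else 0 := by
  rw [count_map']
  split_ifs with h
  · obtain ⟨rfl, rfl⟩ := h
    rw [List.count]
    refine List.countP_congr (fun p _ => ?_)
    simp [beq_eq_decide, decide_eq_decide, Prod.ext_iff, and_comm]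
  · refine List.countP_eq_zero.2 (fun p _ => ?_)
    simp only [beq_eq_decide, decide_eq_true_eq, Prod.ext_iff, R.node.injEq]
    tauto

private lemma cnt4 (l : List R) (u2 v1 v2 : R) (us vs : List R) :
    (l.map (fun x => R.node x u2 us)).count (R.node v1 v2 vs)
      = if u2 = v2 ∧ us = vs then l.count v1 else 0 := by
  rw [count_map']
  split_ifs with h
  · obtain ⟨rfl, rfl⟩ := h
    rw [List.count]
    refine List.countP_congr (fun p _ => ?_)
    simp [beq_eq_decide, decide_eq_decide]
  · refine List.countP_eq_zero.2 (fun p _ => ?_)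
    simp only [beq_eq_decide, decide_eq_true_eq, R.node.injEq]
    tauto

private lemma cnt5 (l : List R) (u1 v1 v2 : R) (us vs : List R) :
    (l.map (fun x => R.node u1 x us)).count (R.node v1 v2 vs)
      = if u1 = v1 ∧ us = vs then l.count v2 else 0 := by
  rw [count_map']
  split_ifs with h
  · obtain ⟨rfl, rfl⟩ := h
    rw [List.count]
    refine List.countP_congr (fun p _ => ?_)
    simp [beq_eq_decide, decide_eq_decide]
  · refine List.countP_eq_zero.2 (fun p _ => ?_)
    simp only [beq_eq_decide, decide_eq_true_eq, R.node.injEq]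
    tauto

private lemma cnt6 (l : List (List R)) (u1 u2 v1 v2 : R) (vs : List R) :
    (l.map (fun x => R.node u1 u2 x)).count (R.node v1 v2 vs)
      = if u1 = v1 ∧ u2 = v2 then l.count vs else 0 := by
  rw [count_map']
  split_ifs with h
  · obtain ⟨rfl, rfl⟩ := h
    rw [List.count]
    refine List.countP_congr (fun p _ => ?_)
    simp [beq_eq_decide, decide_eq_decide]
  · refine List.countP_eq_zero.2 (fun p _ => ?_)
    simp only [beq_eq_decide, decide_eq_true_eq, R.node.injEq]
    tauto

private lemma cnt7 (l : List (R × R)) (t u : R) (us ws : List R) :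
    (l.map (fun p => (p.1, p.2 :: ws))).count (t, u :: us)
      = if us = ws then l.count (t, u) else 0 := by
  rw [count_map']
  split_ifs with h
  · subst h
    rw [List.count]
    refine List.countP_congr (fun p _ => ?_)
    simp [beq_eq_decide, decide_eq_decide, Prod.ext_iff]
  · refine List.countP_eq_zero.2 (fun p _ => ?_)
    simp only [beq_eq_decide, decide_eq_true_eq, Prod.ext_iff, List.cons.injEq]
    tauto

private lemma cnt8 (l : List (R × List R)) (t u w : R) (us : List R) :
    (l.map (fun p => (p.1, w :: p.2))).count (t, u :: us)
      = if u = w then l.count (t, us) else 0 := by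
  rw [count_map']
  split_ifs with h
  · subst h
    rw [List.count]
    refine List.countP_congr (fun p _ => ?_)
    simp [beq_eq_decide, decide_eq_decide, Prod.ext_iff, and_comm]
  · refine List.countP_eq_zero.2 (fun p _ => ?_)
    simp only [beq_eq_decide, decide_eq_true_eq, Prod.ext_iff, List.cons.injEq]
    tauto

private lemma cnt9 (l : List R) (us : List R) (w : R) (ws : List R) :
    (l.map (· :: us)).count (w :: ws)
      = if us = ws then l.count w else 0 := by
  rw [count_map']
  split_ifs with h
  · subst h
    rw [List.count]
    refine List.countP_congr (fun p _ => ?_)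
    simp [beq_eq_decide, decide_eq_decide]
  · refine List.countP_eq_zero.2 (fun p _ => ?_)
    simp only [beq_eq_decide, decide_eq_true_eq, List.cons.injEq]
    tauto

private lemma cnt10 (l : List (List R)) (u w : R) (ws : List R) :
    (l.map (u :: ·)).count (w :: ws)
      = if u = w then l.count ws else 0 := by
  rw [count_map']
  split_ifs with h
  · subst h
    rw [List.count]
    refine List.countP_congr (fun p _ => ?_)
    simp [beq_eq_decide, decide_eq_decide]
  · refine List.countP_eq_zero.2 (fun p _ => ?_)
    simp only [beq_eq_decide, decide_eq_true_eq, List.cons.injEq]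
    tauto

mutual

theorem key (t : R) (ht : t ≠ R.leaf) (u v : R) :
    (cuts1 v).count (t, u) = (graftings t u).count v := by
  match u, v with
  | R.leaf, R.leaf =>
      simp [cuts1, graftings, List.count_singleton', ht]
  | R.leaf, R.node v1 v2 vs =>
      simp [cuts1, graftings, List.count_cons, List.count_append, count_map',
        List.count_singleton', beq_eq_decide, eq_comm]
  | R.node u1 u2 us, R.leaf =>
      simp [cuts1, graftings, List.count_append, count_map', beq_eq_decide]
  | R.node u1 u2 us, R.node v1 v2 vs =>
      have IH1 := key t ht u1 v1
      have IH2 := key t ht u2 v2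
      have IHL := keyL t ht us vs
      simp [cuts1, graftings, List.count_cons, List.count_append,
        cnt1, cnt2, cnt3, cnt4, cnt5, cnt6, IH1, IH2, IHL, beq_eq_decide]
termination_by sizeOf u

theorem keyL (t : R) (ht : t ≠ R.leaf) (us vs : List R) :
    (cuts1L vs).count (t, us) = (graftingsL t us).count vs := by
  match us, vs with
  | [], [] => simp [cuts1L, graftingsL]
  | [], w :: ws =>
      simp [cuts1L, graftingsL, List.count_append, count_map', beq_eq_decide]
  | u :: us, [] =>
      simp [cuts1L, graftingsL, List.count_append, count_map', beq_eq_decide]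
  | u :: us, w :: ws =>
      have IH1 := key t ht u w
      have IHL := keyL t ht us ws
      simp [cuts1L, graftingsL, List.count_cons, List.count_append,
        cnt7, cnt8, cnt9, cnt10, IH1, IHL]
termination_by sizeOf us

end

/-- for all reduced planar trees `t, u, v` different from the leaf,
`N(t,u,v) = M(t,u,v)`. -/
theorem N_eq_M (t u v : R) (ht : t ≠ R.leaf) (hu : u ≠ R.leaf) (hv : v ≠ R.leaf) :
    N t u v = M t u v := key t ht u v
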